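/- Let φ¹(t) = 5^{−2} t² (log t)^4 and φ²(t) = 5^{−2} e^{−2+2√(1−t)} (2t + 2√(1−t) − 2)² for t in a sufficiently small right neighborhood of 0, with φ¹(0) = φ²(0) = 0, and for n large define A_n = log( n^{−1/2} · (φ²)^{-1}(n^{−1/2}) / ((φ¹)^{-1}(n^{−1/2}))² ), where the inverses are the generalized inverses restricted to small arguments. Then the sequence (|A_n|)_n is unbounded. -/

import Mathlib

open Real Set

noncomputable section

/-- `φ¹(t) = 5⁻² t² (log t)⁴` (with `φ¹(0) = 0`, since `Real.log 0 = 0`). -/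
def phi1 (t : ℝ) : ℝ := (5 : ℝ) ^ (-2 : ℤ) * t ^ 2 * Real.log t ^ 4

/-- `φ²(t) = 5⁻² e^{-2+2√(1-t)} (2t + 2√(1-t) - 2)²` (with `φ²(0) = 0`). -/
def phi2 (t : ℝ) : ℝ :=
  (5 : ℝ) ^ (-2 : ℤ) * Real.exp (-2 + 2 * Real.sqrt (1 - t)) *
    (2 * t + 2 * Real.sqrt (1 - t) - 2) ^ 2

/-- The generalized inverse restricted to small arguments:
`φ⁻¹(s) = sup {t ∈ [0,c] : φ t ≤ s}`. -/
def ginvOn (φ : ℝ → ℝ) (c s : ℝ) : ℝ := sSup {t : ℝ | t ∈ Set.Icc 0 c ∧ φ t ≤ s}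

/-- The sequence `A_n = log(n^{-1/2} (φ²)⁻¹(n^{-1/2}) / ((φ¹)⁻¹(n^{-1/2}))²)`
(inverses restricted to `[0,c]`). -/
def seqA (c : ℝ) (n : ℕ) : ℝ :=
  Real.log ((Real.sqrt n)⁻¹ * ginvOn phi2 c (Real.sqrt n)⁻¹ /
    ginvOn phi1 c (Real.sqrt n)⁻¹ ^ 2)

/-! With `s = n^{-1/2} → 0⁺`, the estimate `φ¹(√s / (log s)²) ≤ s` gives
`(φ¹)⁻¹(s) ≥ √s / (log s)²`, while `φ²(t) ≥ e⁻² t² / 50` near `0` gives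
`(φ²)⁻¹(s) ≤ 10 e √s`. So the argument of the logarithm in `A_n` is positive and at most
`10 e √s (log s)⁴ → 0`, hence `A_n → -∞`. -/

open Filter Topology

lemma le_ginvOn {φ : ℝ → ℝ} {c s t : ℝ} (ht : t ∈ Icc 0 c) (hφ : φ t ≤ s) :
    t ≤ ginvOn φ c s :=
  le_csSup ⟨c, fun _ hx => hx.1.2⟩ ⟨ht, hφ⟩

lemma ginvOn_le {φ : ℝ → ℝ} {c s t : ℝ} (hm : MonotoneOn φ (Icc 0 c))
    (ht : t ∈ Icc 0 c) (hs : s < φ t) : ginvOn φ c s ≤ t := by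
  refine Real.sSup_le ?_ ht.1
  rintro x ⟨hx, hxs⟩
  by_contra! hlt
  exact (hs.trans_le (hm ht hx hlt.le)).not_ge hxs

lemma log_le_half_self {x : ℝ} (hx : 0 < x) : log x ≤ x / 2 := by
  have h := log_le_sub_one_of_pos (half_pos hx)
  rw [log_div hx.ne' two_ne_zero] at h
  linarith [log_two_lt_d9]

lemma phi1_sqrt_div_log_sq_le {s : ℝ} (hs : 0 < s) (hL : log s ≤ -1) :
    phi1 (√s / log s ^ 2) ≤ s := by
  obtain ⟨L, hLs⟩ : ∃ L, log s = -L := ⟨-log s, by ring⟩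
  have hL0 : 0 < L := by linarith
  have hlogL : 0 ≤ log L := log_nonneg (by linarith)
  have hlog : log (√s / log s ^ 2) = -(L / 2 + 2 * log L) := by
    have hlogs : log s ^ 2 ≠ 0 := pow_ne_zero 2 (by rw [hLs]; exact neg_ne_zero.2 hL0.ne')
    rw [log_div (by positivity) hlogs, log_sqrt hs.le, log_pow, hLs, log_neg_eq_log]
    push_cast
    ring
  have hsq : (√s / log s ^ 2) ^ 2 = s / L ^ 4 := by
    rw [div_pow, sq_sqrt hs.le, hLs]
    ring
  have hbound : (L / 2 + 2 * log L) ^ 4 ≤ (3 * L / 2) ^ 4 :=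
    pow_le_pow_left₀ (by positivity) (by linarith [log_le_half_self hL0]) 4
  unfold phi1
  rw [mul_assoc, hsq, hlog, Even.neg_pow (by decide)]
  calc (5 : ℝ) ^ (-2 : ℤ) * (s / L ^ 4 * (L / 2 + 2 * log L) ^ 4)
      ≤ 5 ^ (-2 : ℤ) * (s / L ^ 4 * (3 * L / 2) ^ 4) := by gcongr
    _ = 81 / 400 * s := by field_simp; norm_num
    _ ≤ s := by linarith

lemma phi2_eq_of_le_one {t : ℝ} (ht : t ≤ 1) :
    phi2 t = 4 / 25 * exp (2 * √(1 - t) - 2) * (√(1 - t) * (1 - √(1 - t))) ^ 2 := by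
  have hu : √(1 - t) ^ 2 = 1 - t := sq_sqrt (by linarith)
  have ht' : 2 * t + 2 * √(1 - t) - 2 = 2 * (√(1 - t) * (1 - √(1 - t))) := by
    linear_combination 2 * hu
  rw [phi2, ht', zpow_neg, zpow_two]
  ring_nf

lemma sqrt_one_sub_bounds {t : ℝ} (h0 : 0 ≤ t) (h1 : t ≤ 1) :
    t / 2 ≤ 1 - √(1 - t) ∧ 1 - √(1 - t) ≤ t := by
  have hu : √(1 - t) ^ 2 = 1 - t := sq_sqrt (by linarith)
  have hu0 : 0 ≤ √(1 - t) := sqrt_nonneg _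
  have hu1 : √(1 - t) ≤ 1 := sqrt_le_one.2 (by linarith)
  constructor <;> nlinarith

lemma phi2_le_sq {t : ℝ} (h0 : 0 ≤ t) (h1 : t ≤ 1) : phi2 t ≤ t ^ 2 := by
  obtain ⟨-, hhi⟩ := sqrt_one_sub_bounds h0 h1
  have hu0 : 0 ≤ √(1 - t) := sqrt_nonneg _
  have hu1 : √(1 - t) ≤ 1 := sqrt_le_one.2 (by linarith)
  have hexp : exp (2 * √(1 - t) - 2) ≤ 1 := exp_le_one_iff.2 (by linarith)
  have hprod : √(1 - t) * (1 - √(1 - t)) ≤ t := by nlinarith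
  rw [phi2_eq_of_le_one h1]
  calc 4 / 25 * exp (2 * √(1 - t) - 2) * (√(1 - t) * (1 - √(1 - t))) ^ 2
      ≤ 4 / 25 * 1 * t ^ 2 := by gcongr
    _ ≤ t ^ 2 := by nlinarith [sq_nonneg t]

lemma phi2_ge {t : ℝ} (h0 : 0 ≤ t) (h1 : t ≤ 1 / 2) : exp (-2) / 50 * t ^ 2 ≤ phi2 t := by
  obtain ⟨hlo, -⟩ := sqrt_one_sub_bounds h0 (by linarith)
  have hu : √(1 - t) ^ 2 = 1 - t := sq_sqrt (by linarith)
  have hu0 : 0 ≤ √(1 - t) := sqrt_nonneg _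
  have hexp : exp (-2) ≤ exp (2 * √(1 - t) - 2) := exp_le_exp.2 (by linarith)
  have hprod : (t / 2) ^ 2 / 2 ≤ (√(1 - t) * (1 - √(1 - t))) ^ 2 := by
    rw [mul_pow, hu]
    nlinarith [pow_le_pow_left₀ (by positivity) hlo 2]
  rw [phi2_eq_of_le_one (by linarith)]
  calc exp (-2) / 50 * t ^ 2 = 4 / 25 * exp (-2) * ((t / 2) ^ 2 / 2) := by ring
    _ ≤ 4 / 25 * exp (2 * √(1 - t) - 2) * (√(1 - t) * (1 - √(1 - t))) ^ 2 := by gcongr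

lemma sqrt_le_ginvOn_phi2 {c s : ℝ} (hs : 0 ≤ s) (h1 : √s ≤ 1) (hc : √s ≤ c) :
    √s ≤ ginvOn phi2 c s :=
  le_ginvOn ⟨sqrt_nonneg s, hc⟩ (by simpa [sq_sqrt hs] using phi2_le_sq (sqrt_nonneg s) h1)

lemma ginvOn_phi2_le {c s : ℝ} (hm : MonotoneOn phi2 (Icc 0 c)) (hs : 0 < s)
    (hK : 10 * exp 1 * √s ≤ min c (1 / 2)) : ginvOn phi2 c s ≤ 10 * exp 1 * √s := by
  have hK0 : 0 ≤ 10 * exp 1 * √s := by positivity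
  refine ginvOn_le hm ⟨hK0, hK.trans (min_le_left _ _)⟩ ?_
  have hval : exp (-2) / 50 * (10 * exp 1 * √s) ^ 2 = 2 * s := by
    have he : exp (-2) * exp 1 ^ 2 = 1 := by
      rw [sq, ← exp_add, ← exp_add]
      norm_num
    rw [mul_pow, sq_sqrt hs.le]
    linear_combination 2 * s * he
  linarith [phi2_ge hK0 (hK.trans (min_le_right _ _))]

lemma div_log_sq_le_ginvOn_phi1 {c s : ℝ} (hs : 0 < s) (hL : log s ≤ -1) (hc : √s ≤ c) :
    √s / log s ^ 2 ≤ ginvOn phi1 c s :=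
  le_ginvOn ⟨by positivity, (div_le_self (sqrt_nonneg s) (by nlinarith)).trans hc⟩
    (phi1_sqrt_div_log_sq_le hs hL)

def phiRatio (c s : ℝ) : ℝ := s * ginvOn phi2 c s / ginvOn phi1 c s ^ 2

lemma phiRatio_mem_Ioc {c s : ℝ} (hm : MonotoneOn phi2 (Icc 0 c)) (hs : 0 < s)
    (hL : log s ≤ -1) (hK : 10 * exp 1 * √s ≤ min c (1 / 2)) :
    phiRatio c s ∈ Ioc 0 (10 * exp 1 * √s * log s ^ 4) := by
  have hsqrt : 0 < √s := sqrt_pos.2 hs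
  have hsqrt_le : √s ≤ 10 * exp 1 * √s :=
    le_mul_of_one_le_left hsqrt.le (by nlinarith [add_one_le_exp 1])
  have hsc : √s ≤ c := hsqrt_le.trans (hK.trans (min_le_left _ _))
  have hs1 : √s ≤ 1 := by linarith [hK.trans (min_le_right _ _)]
  have h1 := div_log_sq_le_ginvOn_phi1 hs hL hsc
  have h2lo := sqrt_le_ginvOn_phi2 hs.le hs1 hsc
  have h2hi := ginvOn_phi2_le hm hs hK
  have hB : 0 < √s / log s ^ 2 := div_pos hsqrt (by nlinarith)
  refine ⟨div_pos (mul_pos hs (hsqrt.trans_le h2lo)) (pow_pos (hB.trans_le h1) 2), ?_⟩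
  calc phiRatio c s ≤ s * (10 * exp 1 * √s) / (√s / log s ^ 2) ^ 2 := by
        unfold phiRatio; gcongr
    _ = 10 * exp 1 * √s * log s ^ 4 := by
        rw [div_pow, sq_sqrt hs.le]
        field_simp

lemma tendsto_sqrt_mul_log_pow_four_nhdsGT_zero :
    Tendsto (fun s => √s * log s ^ 4) (𝓝[>] 0) (𝓝 0) := by
  have h := (tendsto_log_mul_rpow_nhdsGT_zero (by norm_num : (0 : ℝ) < 1 / 8)).pow 4
  rw [zero_pow (by norm_num)] at h
  refine h.congr' (eventually_mem_nhdsWithin.mono fun s (hs : 0 < s) => ?_)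
  change (log s * s ^ (1 / 8 : ℝ)) ^ 4 = √s * log s ^ 4
  rw [mul_pow, ← rpow_mul_natCast hs.le, sqrt_eq_rpow]
  norm_num
  ring

lemma tendsto_phiRatio {c : ℝ} (hc : 0 < c) (hm : MonotoneOn phi2 (Icc 0 c)) :
    Tendsto (phiRatio c) (𝓝[>] 0) (𝓝[>] 0) := by
  have hK : Tendsto (fun s => 10 * exp 1 * √s) (𝓝[>] 0) (𝓝 0) := by
    simpa using ((continuous_sqrt.tendsto 0).const_mul (10 * exp 1)).mono_left
      (nhdsWithin_le_nhds (s := Ioi 0))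
  have hbound : Tendsto (fun s => 10 * exp 1 * √s * log s ^ 4) (𝓝[>] 0) (𝓝 0) := by
    simpa [mul_assoc] using tendsto_sqrt_mul_log_pow_four_nhdsGT_zero.const_mul (10 * exp 1)
  have hmem : ∀ᶠ s in 𝓝[>] 0, phiRatio c s ∈ Ioc 0 (10 * exp 1 * √s * log s ^ 4) := by
    filter_upwards [self_mem_nhdsWithin, tendsto_log_nhdsGT_zero.eventually_le_atBot (-1),
      hK.eventually_le_const (lt_min hc one_half_pos)] with s hs hL hKs
    exact phiRatio_mem_Ioc hm hs hL hKs
  refine tendsto_nhdsWithin_iff.2 ⟨?_, hmem.mono fun _ h => h.1⟩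
  exact tendsto_of_tendsto_of_tendsto_of_le_of_le' tendsto_const_nhds hbound
    (hmem.mono fun _ h => h.1.le) (hmem.mono fun _ h => h.2)

lemma tendsto_seqA_atBot {c : ℝ} (hc : 0 < c) (hm : MonotoneOn phi2 (Icc 0 c)) :
    Tendsto (seqA c) atTop atBot :=
  tendsto_log_nhdsGT_zero.comp <| (tendsto_phiRatio hc hm).comp <|
    tendsto_inv_atTop_nhdsGT_zero.comp <| tendsto_sqrt_atTop.comp tendsto_natCast_atTop_atTop

theorem statement15_general (c : ℝ) (hc0 : 0 < c) (h2m : StrictMonoOn phi2 (Set.Icc 0 c)) :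
    ∀ M : ℝ, ∀ N : ℕ, ∃ n : ℕ, N ≤ n ∧ M < |seqA c n| := by
  intro M N
  have habs := tendsto_abs_atBot_atTop.comp (tendsto_seqA_atBot hc0 h2m.monotoneOn)
  exact ((eventually_ge_atTop N).and (habs.eventually_gt_atTop M)).exists

/-- The sequence `(|A_n|)` (for large `n`) is unbounded, where the inverses of
`φ¹, φ²` are restricted to any interval `[0,c]` on which these functions are strictly
increasing and continuous. -/
theorem statement15 (c : ℝ) (hc0 : 0 < c) (hc1 : c < 1)
    (h1m : StrictMonoOn phi1 (Set.Icc 0 c)) (h1c : ContinuousOn phi1 (Set.Icc 0 c))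
    (h2m : StrictMonoOn phi2 (Set.Icc 0 c)) (h2c : ContinuousOn phi2 (Set.Icc 0 c)) :
    ∀ M : ℝ, ∀ N : ℕ, ∃ n : ℕ, N ≤ n ∧ M < |seqA c n| :=
  statement15_general c hc0 h2m
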